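/- arXiv:1111.1745 — 2 statements merged into one kernel-verified Lean document; each statement's English description precedes it below -/
import Mathlib

section
/- Let 𝒜 be the heart of a bounded t-structure on a triangulated category 𝒟. Then there is a bijection between torsion theories (𝒯, ℱ) on 𝒜 and t-structures 𝒟'^{≤0} on 𝒟 satisfying 𝒟^{≤0}[1] ⊆ 𝒟'^{≤0} ⊆ 𝒟^{≤0}, given by 𝒟'^{≤0} = {E : H^i(E) = 0 for i > 0 and H^0(E) ∈ 𝒯} and inversely 𝒯 = 𝒜 ∩ 𝒟'^{≤0}. -/
/-!
STATEMENT 9: Let `𝒜` be the heart of a bounded t-structure on a triangulated category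
`𝒟`. There is a bijection between torsion theories `(𝒯, ℱ)` on `𝒜` and t-structures
`𝒟'^{≤0}` on `𝒟` with `𝒟^{≤0}[1] ⊆ 𝒟'^{≤0} ⊆ 𝒟^{≤0}`, given by
`𝒟'^{≤0} = {E : Hⁱ(E) = 0 for i > 0 and H⁰(E) ∈ 𝒯}` and inversely `𝒯 = 𝒜 ∩ 𝒟'^{≤0}`.

Here `Hⁱ(E) = 0` for `i > 0` means `E ∈ 𝒟^{≤0}`, and for such `E` the condition
`H⁰(E) ∈ 𝒯` means: there is a distinguished triangle `A → E → B → A[1]`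
with `A ∈ 𝒟^{≤-1}` and `B ∈ 𝒜` with `B ∈ 𝒯` (so that `B = H⁰(E)`).
Short exact sequences in the heart are distinguished triangles with all vertices in `𝒜`.
-/

open CategoryTheory CategoryTheory.Limits CategoryTheory.Pretriangulated
  CategoryTheory.Triangulated

universe v u

variable {C : Type u} [Category.{v} C] [Preadditive C] [HasZeroObject C] [HasShift C ℤ]
  [∀ n : ℤ, (shiftFunctor C n).Additive] [Pretriangulated C]

/-- Membership in the heart `𝒜 = 𝒟^{≤0} ∩ 𝒟^{≥0}` of a t-structure. -/
def heartP (t : TStructure C) (E : C) : Prop := t.le 0 E ∧ t.ge 0 E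

/-- A t-structure is bounded if every object lies in `𝒟^{≤n} ∩ 𝒟^{≥-n}` for some `n`. -/
def TStructureIsBounded (t : TStructure C) : Prop :=
  ∀ E : C, ∃ n : ℕ, t.le n E ∧ t.ge (-(n : ℤ)) E

/-- A torsion theory on the heart `𝒜` of a t-structure `t` on a triangulated category:
full subcategories `𝒯, ℱ ⊆ 𝒜` (closed under isomorphism) with `Hom(𝒯,ℱ) = 0` and such
that every `E ∈ 𝒜` fits into a short exact sequence in `𝒜`, i.e. a distinguished
triangle `T → E → F → T[1]` with `T ∈ 𝒯`, `F ∈ ℱ`. -/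
structure HeartTorsionTheory (t : TStructure C) where
  tor : C → Prop
  free : C → Prop
  tor_heart : ∀ E, tor E → heartP t E
  free_heart : ∀ E, free E → heartP t E
  tor_iso : ∀ {X Y : C}, (X ≅ Y) → tor X → tor Y
  free_iso : ∀ {X Y : C}, (X ≅ Y) → free X → free Y
  hom_zero : ∀ {X Y : C} (f : X ⟶ Y), tor X → free Y → f = 0
  exists_triangle : ∀ E : C, heartP t E →
    ∃ (A B : C) (f : A ⟶ E) (g : E ⟶ B) (h : B ⟶ A⟦(1 : ℤ)⟧),
      tor A ∧ free B ∧ Triangle.mk f g h ∈ distTriang C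

/-!
The aisle `𝒰 = {E ∈ 𝒟^{≤0} : H⁰(E) ∈ 𝒯}` is also `𝒟^{≤0} ∩ ⊥𝓕`, so it contains `𝒟^{≤-1}` and is
stable under `[1]`. A t-structure is determined by its aisle, and such a `𝒰` is the aisle of a
t-structure as soon as every `E` sits in a triangle `X → E → Z` with `X ∈ 𝒰` and `Z ∈ 𝒰^⊥`.
Take `X` to be the fibre of `τ^{≤0}E → H⁰(E) → F`, where `T → H⁰(E) → F` is the torsion sequence,
and `Z` the cone of `X → E`: the long exact `Hom` sequences give `X ∈ 𝒰` and `Z ∈ 𝒰^⊥` without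
the octahedral axiom. Conversely an intermediate t-structure gives the torsion theory
`(𝒜 ∩ 𝒟'^{≤0}, 𝒜 ∩ 𝒟'^{≥1})`.
-/

namespace CategoryTheory

namespace Pretriangulated

lemma isZero₃_of_mor₂_eq_zero {T : Triangle C} (hT : T ∈ distTriang C) (h₂ : T.mor₂ = 0)
    (h : ∀ k : T.obj₁⟦(1 : ℤ)⟧ ⟶ T.obj₃, k = 0) : IsZero T.obj₃ := by
  obtain ⟨k, hk⟩ := Triangle.yoneda_exact₃ T hT (𝟙 _) (by rw [h₂, zero_comp])
  rw [IsZero.iff_id_eq_zero, hk, h k, comp_zero]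

lemma isZero₁_of_mor₁_eq_zero {T : Triangle C} (hT : T ∈ distTriang C) (h₁ : T.mor₁ = 0)
    (h : ∀ k : T.obj₁⟦(1 : ℤ)⟧ ⟶ T.obj₃, k = 0) : IsZero T.obj₁ := by
  obtain ⟨k, hk⟩ := Triangle.coyoneda_exact₁ T hT (𝟙 _) (by rw [h₁, Functor.map_zero, comp_zero])
  have hZ : IsZero (T.obj₁⟦(1 : ℤ)⟧) := by rw [IsZero.iff_id_eq_zero, hk, h k, zero_comp]
  exact ((shiftFunctor C (-1 : ℤ)).map_isZero hZ).of_iso ((shiftEquiv C (1 : ℤ)).unitIso.app _)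

lemma hom_eq_zero_of_extend_of_injective {T : Triangle C} (hT : T ∈ distTriang C) {W : C}
    (h₂ : ∀ k : T.obj₂ ⟶ W, ∃ m : T.obj₃ ⟶ W, k = T.mor₂ ≫ m)
    (h₃ : ∀ ψ : T.obj₃ ⟶ W⟦(1 : ℤ)⟧, T.mor₂ ≫ ψ = 0 → ψ = 0) (g : T.obj₁ ⟶ W) : g = 0 := by
  have hψ : T.mor₃ ≫ g⟦(1 : ℤ)⟧' = 0 :=
    h₃ _ (by rw [← Category.assoc, comp_distTriang_mor_zero₂₃ _ hT, zero_comp])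
  obtain ⟨k, hk⟩ : ∃ k : T.obj₂⟦(1 : ℤ)⟧ ⟶ W⟦(1 : ℤ)⟧, g⟦(1 : ℤ)⟧' = (-T.mor₁⟦(1 : ℤ)⟧') ≫ k :=
    Triangle.yoneda_exact₃ _ (rot_of_distTriang _ hT) _ hψ
  obtain ⟨m, hm⟩ := h₂ ((shiftFunctor C (1 : ℤ)).preimage k)
  rw [← (shiftFunctor C (1 : ℤ)).map_preimage k, hm, Preadditive.neg_comp, ← Functor.map_comp,
    ← Category.assoc, comp_distTriang_mor_zero₁₂ _ hT, zero_comp, Functor.map_zero, neg_zero] at hk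
  exact (shiftFunctor C (1 : ℤ)).map_injective (by rw [hk, Functor.map_zero])

end Pretriangulated

namespace ObjectProperty

open Pretriangulated

lemma rightOrthogonal_le_shift_neg {D : Type*} [Category* D] [HasZeroMorphisms D] {A : Type*}
    [AddGroup A] [HasShift D A] (P : ObjectProperty D) (a : A) [P.IsStableUnderShiftBy a] :
    P.rightOrthogonal ≤ P.rightOrthogonal.shift (-a) := by
  intro Y hY X f hX
  apply (shiftFunctor D a).map_injective
  have := hY (f⟦a⟧' ≫ (shiftFunctorCompIsoId D (-a) a (neg_add_cancel a)).hom.app Y)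
    (P.le_shift a X hX)
  rw [Functor.map_zero,
    ← cancel_mono ((shiftFunctorCompIsoId D (-a) a (neg_add_cancel a)).hom.app Y), this, zero_comp]

/-- With the octahedral axiom `Z` would be an extension of `F` by `Y`; without it, the comparison
maps of triangles `ρ : F ⟶ Z` and `p : Z ⟶ Y` still suffice for orthogonality. -/
lemma rightOrthogonal_of_distTriang_comp (P : ObjectProperty C) {X X₀ E F Y Z : C}
    {x : X ⟶ X₀} {q : X₀ ⟶ F} {δq : F ⟶ X⟦(1 : ℤ)⟧} {a : X₀ ⟶ E} {d : E ⟶ Y}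
    {δa : Y ⟶ X₀⟦(1 : ℤ)⟧} {e : E ⟶ Z} {δ : Z ⟶ X⟦(1 : ℤ)⟧}
    (hx : Triangle.mk x q δq ∈ distTriang C) (ha : Triangle.mk a d δa ∈ distTriang C)
    (hxa : Triangle.mk (x ≫ a) e δ ∈ distTriang C)
    (hF : P.rightOrthogonal F) (hY : P.rightOrthogonal Y) : P.rightOrthogonal Z := by
  obtain ⟨ρ, hρ, -⟩ : ∃ ρ : F ⟶ Z, q ≫ ρ = a ≫ e ∧ _ :=
    complete_distinguished_triangle_morphism _ _ hx hxa (𝟙 X) a (Category.id_comp _).symm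
  obtain ⟨p, -, hp⟩ : ∃ p : Z ⟶ Y, _ ∧ δ ≫ x⟦(1 : ℤ)⟧' = p ≫ δa :=
    complete_distinguished_triangle_morphism _ _ hxa ha x (𝟙 E) (Category.comp_id _)
  intro V φ hV
  have hδx : (φ ≫ δ) ≫ (-x⟦(1 : ℤ)⟧') = 0 := by
    rw [Preadditive.comp_neg, Category.assoc, hp, ← Category.assoc, hY (φ ≫ p) hV, zero_comp,
      neg_zero]
  obtain ⟨k, hk⟩ : ∃ k : V ⟶ F, φ ≫ δ = k ≫ δq :=
    Triangle.coyoneda_exact₃ _ (rot_of_distTriang _ hx) _ hδx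
  obtain ⟨k', hk'⟩ : ∃ k' : V ⟶ E, φ = k' ≫ e :=
    Triangle.coyoneda_exact₃ _ hxa φ (show φ ≫ δ = 0 by rw [hk, hF k hV, zero_comp])
  obtain ⟨k'', hk''⟩ : ∃ k'' : V ⟶ X₀, k' = k'' ≫ a := Triangle.coyoneda_exact₂ _ ha k' (hY _ hV)
  rw [hk', hk'', Category.assoc, ← hρ, ← Category.assoc, hF (k'' ≫ q) hV, zero_comp]

end ObjectProperty
end CategoryTheory

namespace CategoryTheory.Triangulated.TStructure

open Pretriangulated

variable (t : TStructure C)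

lemma ge_eq_rightOrthogonal (n₀ n₁ : ℤ) (h : n₀ + 1 = n₁) :
    t.ge n₁ = (t.le n₀).rightOrthogonal := by
  ext X
  simp only [ge_iff_isGE, t.isGE_iff_orthogonal n₀ n₁ h, ObjectProperty.rightOrthogonal_iff,
    le_iff_isLE]

lemma le_obj₃_of_distTriang {T : Triangle C} (hT : T ∈ distTriang C) (n : ℤ)
    (h₁ : t.le (n + 1) T.obj₁) (h₂ : t.le n T.obj₂) : t.le n T.obj₃ :=
  (t.isLE₂ _ (rot_of_distTriang _ hT) n ⟨h₂⟩ ⟨t.le_shift (n + 1) 1 n (by lia) _ h₁⟩).le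

lemma ge_obj₁_of_distTriang {T : Triangle C} (hT : T ∈ distTriang C) (n : ℤ)
    (h₂ : t.ge n T.obj₂) (h₃ : t.ge (n - 1) T.obj₃) : t.ge n T.obj₁ :=
  (t.isGE₂ _ (inv_rot_of_distTriang _ hT) n ⟨t.ge_shift (n - 1) (-1) n (by lia) _ h₃⟩ ⟨h₂⟩).ge

lemma hom_shift_one_eq_zero {X Y : C} (hX : t.le 0 X) (hY : t.ge 0 Y) (f : X⟦(1 : ℤ)⟧ ⟶ Y) :
    f = 0 :=
  t.zero_of_isLE_of_isGE f (-1) 0 (by lia) ⟨t.le_shift 0 1 (-1) (by lia) X hX⟩ ⟨hY⟩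

variable {t} in
lemma ext_of_le_zero {t' : TStructure C} (h : t.le 0 = t'.le 0) : t = t' := by
  have hle : t.le = t'.le := funext fun n => by
    rw [← t.shift_le n 0 n (add_zero n), ← t'.shift_le n 0 n (add_zero n), h]
  have hge : t.ge = t'.ge := funext fun n => by
    rw [t.ge_eq_rightOrthogonal (n - 1) n (by lia), t'.ge_eq_rightOrthogonal (n - 1) n (by lia),
      hle]
  cases t; cases t'; cases hle; cases hge; rfl

section ofAisle

variable (U : ObjectProperty C) [U.IsClosedUnderIsomorphisms] [U.IsStableUnderShiftBy (1 : ℤ)]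
  (exists_triangle : ∀ E : C, ∃ (X Y : C) (_ : U X) (_ : U.rightOrthogonal Y) (f : X ⟶ E)
    (g : E ⟶ Y) (h : Y ⟶ X⟦(1 : ℤ)⟧), Triangle.mk f g h ∈ distTriang C)

def ofAisle : TStructure C where
  le n := U.shift n
  ge n := U.rightOrthogonal.shift (n - 1)
  le_shift n a n' h X hX := by
    change (U.shift n').shift a X
    rwa [U.shift_shift a n' n h]
  ge_shift n a n' h X hX := by
    change (U.rightOrthogonal.shift (n' - 1)).shift a X
    rwa [ObjectProperty.shift_shift _ a (n' - 1) (n - 1) (by lia)]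
  zero' X Y f hX hY := by
    rw [ObjectProperty.shift_zero] at hX
    rw [sub_self, ObjectProperty.shift_zero] at hY
    exact hY f hX
  le_zero_le := by
    rw [U.shift_zero ℤ]
    exact U.le_shift 1
  ge_one_le := by
    rw [sub_self, zero_sub, ObjectProperty.shift_zero]
    exact U.rightOrthogonal_le_shift_neg 1
  exists_triangle_zero_one := by
    simpa only [sub_self, ObjectProperty.shift_zero] using exists_triangle

lemma ofAisle_le_zero : (ofAisle U exists_triangle).le 0 = U :=
  U.shift_zero ℤ

end ofAisle

end CategoryTheory.Triangulated.TStructure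

namespace HeartTorsionTheory

open Pretriangulated

variable {t : TStructure C}

lemma ext {tt tt' : HeartTorsionTheory t} (htor : ∀ E, tt.tor E ↔ tt'.tor E)
    (hfree : ∀ E, tt.free E ↔ tt'.free E) : tt = tt' := by
  cases tt; cases tt'
  obtain rfl := funext fun E => propext (htor E)
  obtain rfl := funext fun E => propext (hfree E)
  rfl

variable (tt : HeartTorsionTheory t)

lemma tor_of_leftOrthogonal {E : C} (hE : heartP t E)
    (h : ObjectProperty.leftOrthogonal tt.free E) : tt.tor E := by
  obtain ⟨T, F, s, r, z, hT, hF, hTF⟩ := tt.exists_triangle E hE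
  have hF₀ : IsZero F := isZero₃_of_mor₂_eq_zero hTF (h r hF)
    (t.hom_shift_one_eq_zero (tt.tor_heart T hT).1 (tt.free_heart F hF).2)
  have : IsIso s := (Triangle.isZero₃_iff_isIso₁ _ hTF).1 hF₀
  exact tt.tor_iso (asIso s) hT

lemma free_of_rightOrthogonal {E : C} (hE : heartP t E)
    (h : ObjectProperty.rightOrthogonal tt.tor E) : tt.free E := by
  obtain ⟨T, F, s, r, z, hT, hF, hTF⟩ := tt.exists_triangle E hE
  have hT₀ : IsZero T := isZero₁_of_mor₁_eq_zero hTF (h s hT)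
    (t.hom_shift_one_eq_zero (tt.tor_heart T hT).1 (tt.free_heart F hF).2)
  have : IsIso r := (Triangle.isZero₁_iff_isIso₂ _ hTF).1 hT₀
  exact tt.free_iso (asIso r).symm hF

def aisle : ObjectProperty C := fun E => t.le 0 E ∧
  ∃ (A B : C) (f : A ⟶ E) (g : E ⟶ B) (h : B ⟶ A⟦(1 : ℤ)⟧),
    t.le (-1) A ∧ heartP t B ∧ tt.tor B ∧ Triangle.mk f g h ∈ distTriang C

lemma aisle_iff (E : C) :
    tt.aisle E ↔ t.le 0 E ∧ ObjectProperty.leftOrthogonal tt.free E := by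
  constructor
  · rintro ⟨hE, A, B, f, g, h, hA, -, hB, hT⟩
    refine ⟨hE, fun F φ hF => ?_⟩
    obtain ⟨k, rfl⟩ : ∃ k : B ⟶ F, φ = g ≫ k := Triangle.yoneda_exact₂ _ hT φ
      (t.zero_of_isLE_of_isGE _ (-1) 0 (by lia) ⟨hA⟩ ⟨(tt.free_heart F hF).2⟩)
    rw [tt.hom_zero k hB hF, comp_zero]
  · rintro ⟨hE, hEF⟩
    obtain ⟨A, H, hA, hH, u, v, w, hT⟩ := t.exists_triangle E (-1) 0 (by lia)
    have hA₀ : t.le 0 A := t.le_monotone (by lia) _ hA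
    have hH' : heartP t H := ⟨t.le_obj₃_of_distTriang hT 0 (t.le_monotone (by lia) _ hA₀) hE, hH⟩
    refine ⟨hE, A, H, u, v, w, hA, hH', tt.tor_of_leftOrthogonal hH' fun F k hF => ?_, hT⟩
    obtain ⟨m, rfl⟩ : ∃ m : A⟦(1 : ℤ)⟧ ⟶ F, k = w ≫ m :=
      Triangle.yoneda_exact₃ _ hT k (hEF (v ≫ k) hF)
    rw [t.hom_shift_one_eq_zero hA₀ (tt.free_heart F hF).2 m, comp_zero]

lemma aisle_of_le_neg_one {E : C} (hE : t.le (-1) E) : tt.aisle E :=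
  (tt.aisle_iff E).2 ⟨t.le_monotone (by lia) _ hE, fun F f hF =>
    t.zero_of_isLE_of_isGE f (-1) 0 (by lia) ⟨hE⟩ ⟨(tt.free_heart F hF).2⟩⟩

lemma aisle_of_tor {E : C} (hE : tt.tor E) : tt.aisle E :=
  (tt.aisle_iff E).2 ⟨(tt.tor_heart E hE).1, fun _ f hF => tt.hom_zero f hE hF⟩

instance : tt.aisle.IsClosedUnderIsomorphisms where
  of_iso e hE := by
    rw [aisle_iff] at hE ⊢
    exact ⟨(t.le 0).prop_of_iso e hE.1, (ObjectProperty.leftOrthogonal tt.free).prop_of_iso e hE.2⟩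

instance : tt.aisle.IsStableUnderShiftBy (1 : ℤ) where
  le_shift E hE := tt.aisle_of_le_neg_one (t.le_shift 0 1 (-1) (by lia) E hE.1)

lemma tor_iff (E : C) : tt.tor E ↔ heartP t E ∧ tt.aisle E :=
  ⟨fun h => ⟨tt.tor_heart E h, tt.aisle_of_tor h⟩,
    fun ⟨hE, hE'⟩ => tt.tor_of_leftOrthogonal hE ((tt.aisle_iff E).1 hE').2⟩

lemma free_iff (E : C) : tt.free E ↔ heartP t E ∧ tt.aisle.rightOrthogonal E :=
  ⟨fun h => ⟨tt.free_heart E h, fun V f hV => ((tt.aisle_iff V).1 hV).2 f h⟩,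
    fun ⟨hE, hE'⟩ => tt.free_of_rightOrthogonal hE fun _ f hT => hE' f (tt.aisle_of_tor hT)⟩

/-- `X` is the fibre of `X₀ ⟶ H⁰(X₀) ⟶ F`, with `T ⟶ H⁰(X₀) ⟶ F` the torsion sequence. -/
lemma hom_fiber_eq_zero {A X₀ H T F X W : C} {u : A ⟶ X₀} {v : X₀ ⟶ H} {w : H ⟶ A⟦(1 : ℤ)⟧}
    {s : T ⟶ H} {r : H ⟶ F} {z : F ⟶ T⟦(1 : ℤ)⟧} {x : X ⟶ X₀} {δ : F ⟶ X⟦(1 : ℤ)⟧}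
    (hA : t.le (-1) A) (hT : tt.tor T) (hAH : Triangle.mk u v w ∈ distTriang C)
    (hTF : Triangle.mk s r z ∈ distTriang C) (hX : Triangle.mk x (v ≫ r) δ ∈ distTriang C)
    (hW : t.ge 0 W) (hWT : ObjectProperty.rightOrthogonal tt.tor W) (g : X ⟶ W) : g = 0 := by
  refine hom_eq_zero_of_extend_of_injective hX (fun k => ?_) (fun ψ hψ => ?_) g
  · obtain ⟨k', rfl⟩ : ∃ k' : H ⟶ W, k = v ≫ k' := Triangle.yoneda_exact₂ _ hAH k
      (t.zero_of_isLE_of_isGE _ (-1) 0 (by lia) ⟨hA⟩ ⟨hW⟩)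
    obtain ⟨k'', rfl⟩ : ∃ k'' : F ⟶ W, k' = r ≫ k'' :=
      Triangle.yoneda_exact₂ _ hTF k' (hWT (s ≫ k') hT)
    exact ⟨k'', (Category.assoc _ _ _).symm⟩
  · obtain ⟨m, hm⟩ : ∃ m : A⟦(1 : ℤ)⟧ ⟶ W⟦(1 : ℤ)⟧, r ≫ ψ = w ≫ m :=
      Triangle.yoneda_exact₃ _ hAH _ ((Category.assoc v r ψ).symm.trans hψ)
    have hrψ : r ≫ ψ = 0 := by
      rw [hm, t.zero_of_isLE_of_isGE m (-2) (-1) (by lia) ⟨t.le_shift (-1) 1 (-2) (by lia) A hA⟩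
        ⟨t.ge_shift 0 1 (-1) (by lia) W hW⟩, comp_zero]
    obtain ⟨m', rfl⟩ : ∃ m' : T⟦(1 : ℤ)⟧ ⟶ W⟦(1 : ℤ)⟧, ψ = z ≫ m' :=
      Triangle.yoneda_exact₃ _ hTF ψ hrψ
    obtain ⟨m'', rfl⟩ := (shiftFunctor C (1 : ℤ)).map_surjective m'
    rw [hWT m'' hT, Functor.map_zero]
    exact comp_zero

lemma exists_distTriang_aisle_free {X₀ : C} (hX₀ : t.le 0 X₀) :
    ∃ (X F : C) (x : X ⟶ X₀) (q : X₀ ⟶ F) (δ : F ⟶ X⟦(1 : ℤ)⟧),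
      tt.aisle X ∧ tt.free F ∧ Triangle.mk x q δ ∈ distTriang C := by
  obtain ⟨A, H, hA, hH, u, v, w, hAH⟩ := t.exists_triangle X₀ (-1) 0 (by lia)
  obtain ⟨T, F, s, r, z, hT, hF, hTF⟩ :=
    tt.exists_triangle H ⟨t.le_obj₃_of_distTriang hAH 0 (t.le_monotone (by lia) _ hA) hX₀, hH⟩
  obtain ⟨X, x, δ, hX⟩ := distinguished_cocone_triangle₁ (v ≫ r)
  have hom_eq_zero {W : C} := tt.hom_fiber_eq_zero (W := W) hA hT hAH hTF hX
  refine ⟨X, F, x, v ≫ r, δ, (tt.aisle_iff X).2 ⟨?_, fun F' f hF' => ?_⟩, hF, hX⟩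
  · rw [t.le_iff_isLE, t.isLE_iff_orthogonal 0 1 (by lia)]
    exact fun W f hW => hom_eq_zero (t.ge_antitone (by lia) _ hW.ge)
      (fun T' g hT' => t.zero_of_isLE_of_isGE g 0 1 (by lia) ⟨(tt.tor_heart T' hT').1⟩ hW) f
  · exact hom_eq_zero (tt.free_heart F' hF').2 (fun T' g hT' => tt.hom_zero g hT' hF') f

lemma exists_distTriang_aisle_rightOrthogonal (E : C) :
    ∃ (X Y : C) (_ : tt.aisle X) (_ : tt.aisle.rightOrthogonal Y) (f : X ⟶ E) (g : E ⟶ Y)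
      (h : Y ⟶ X⟦(1 : ℤ)⟧), Triangle.mk f g h ∈ distTriang C := by
  obtain ⟨X₀, Y, hX₀, hY, a, d, δa, ha⟩ := t.exists_triangle E 0 1 (by lia)
  obtain ⟨X, F, x, q, δq, hX, hF, hx⟩ := tt.exists_distTriang_aisle_free hX₀
  obtain ⟨Z, e, δ, hxa⟩ := distinguished_cocone_triangle (x ≫ a)
  refine ⟨X, Z, hX, tt.aisle.rightOrthogonal_of_distTriang_comp hx ha hxa
    (fun V f hV => ((tt.aisle_iff V).1 hV).2 f hF)
    (fun V f hV => t.zero_of_isLE_of_isGE f 0 1 (by lia) ⟨hV.1⟩ ⟨hY⟩), x ≫ a, e, δ, hxa⟩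

def toTStructure : TStructure C :=
  TStructure.ofAisle tt.aisle tt.exists_distTriang_aisle_rightOrthogonal

lemma toTStructure_le_zero : tt.toTStructure.le 0 = tt.aisle :=
  TStructure.ofAisle_le_zero _ _

lemma toTStructure_ge_one : tt.toTStructure.ge 1 = tt.aisle.rightOrthogonal := by
  rw [tt.toTStructure.ge_eq_rightOrthogonal 0 1 rfl, toTStructure_le_zero]

variable (t' : TStructure C) (h₁ : ∀ E : C, t.le (-1) E → t'.le 0 E)
  (h₂ : ∀ E : C, t'.le 0 E → t.le 0 E)

def ofTStructure : HeartTorsionTheory t where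
  tor E := heartP t E ∧ t'.le 0 E
  free E := heartP t E ∧ t'.ge 1 E
  tor_heart _ h := h.1
  free_heart _ h := h.1
  tor_iso e h := ⟨t.heart.prop_of_iso e h.1, (t'.le 0).prop_of_iso e h.2⟩
  free_iso e h := ⟨t.heart.prop_of_iso e h.1, (t'.ge 1).prop_of_iso e h.2⟩
  hom_zero f hX hY := t'.zero' f hX.2 hY.2
  exists_triangle E hE := by
    obtain ⟨A, B, hA, hB, f, g, h, hT⟩ := t'.exists_triangle_zero_one E
    have hB₀ : t.ge 0 B := by
      rw [t'.ge_eq_rightOrthogonal 0 1 rfl] at hB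
      rw [t.ge_eq_rightOrthogonal (-1) 0 (by lia)]
      exact fun V φ hV => hB φ (h₁ V hV)
    have hA' : heartP t A :=
      ⟨h₂ A hA, t.ge_obj₁_of_distTriang hT 0 hE.2 (t.ge_antitone (by lia) _ hB₀)⟩
    have hB' : heartP t B :=
      ⟨t.le_obj₃_of_distTriang hT 0 (t.le_monotone (by lia) _ hA'.1) hE.1, hB₀⟩
    exact ⟨A, B, f, g, h, ⟨hA', hA⟩, ⟨hB', hB⟩, hT⟩

lemma aisle_ofTStructure : (ofTStructure t' h₁ h₂).aisle = t'.le 0 := by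
  ext E
  constructor
  · rintro ⟨-, A, B, f, g, h, hA, -, ⟨-, hB⟩, hT⟩
    exact (t'.isLE₂ _ hT 0 ⟨h₁ A hA⟩ ⟨hB⟩).le
  · intro hE
    obtain ⟨A, H, hA, hH, u, v, w, hT⟩ := t.exists_triangle E (-1) 0 (by lia)
    have hH' : heartP t H :=
      ⟨t.le_obj₃_of_distTriang hT 0 (t.le_monotone (by lia) _ hA) (h₂ E hE), hH⟩
    exact ⟨h₂ E hE, A, H, u, v, w, hA, hH',
      ⟨hH', t'.le_obj₃_of_distTriang hT 0 (t'.le_monotone (by lia) _ (h₁ A hA)) hE⟩, hT⟩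

variable (t) in
def equivIntermediateTStructure : HeartTorsionTheory t ≃
    {t' : TStructure C // (∀ E : C, t.le (-1) E → t'.le 0 E) ∧ (∀ E : C, t'.le 0 E → t.le 0 E)}
    where
  toFun tt := ⟨tt.toTStructure, by
    rw [toTStructure_le_zero]
    exact ⟨fun _ => tt.aisle_of_le_neg_one, fun _ hE => hE.1⟩⟩
  invFun t' := ofTStructure t'.1 t'.2.1 t'.2.2
  left_inv tt := by
    refine ext (fun E => ?_) (fun E => ?_)
    · exact (tt.toTStructure_le_zero ▸ tt.tor_iff E).symm
    · exact (tt.toTStructure_ge_one ▸ tt.free_iff E).symm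
  right_inv t' := Subtype.ext <| TStructure.ext_of_le_zero <| by
    rw [toTStructure_le_zero, aisle_ofTStructure]

end HeartTorsionTheory

theorem torsion_theories_biject_with_intermediate_tstructures_general
    (t : TStructure C) :
    ∃ e : HeartTorsionTheory t ≃
        {t' : TStructure C //
          (∀ E : C, t.le (-1) E → t'.le 0 E) ∧ (∀ E : C, t'.le 0 E → t.le 0 E)},
      -- the forward map is 𝒟'^{≤0} = {E : Hⁱ(E)=0 for i>0 and H⁰(E) ∈ 𝒯}
      (∀ (tt : HeartTorsionTheory t) (E : C),
        (e tt).1.le 0 E ↔ (t.le 0 E ∧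
          ∃ (A B : C) (f : A ⟶ E) (g : E ⟶ B) (h : B ⟶ A⟦(1 : ℤ)⟧),
            t.le (-1) A ∧ heartP t B ∧ tt.tor B ∧ Triangle.mk f g h ∈ distTriang C)) ∧
      -- the inverse map is 𝒯 = 𝒜 ∩ 𝒟'^{≤0}
      (∀ (tt : HeartTorsionTheory t) (E : C),
        tt.tor E ↔ (heartP t E ∧ (e tt).1.le 0 E)) :=
  ⟨HeartTorsionTheory.equivIntermediateTStructure t,
    fun tt E => Iff.of_eq (congrFun tt.toTStructure_le_zero E),
    fun tt E => tt.toTStructure_le_zero ▸ tt.tor_iff E⟩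

theorem torsion_theories_biject_with_intermediate_tstructures
    (t : TStructure C) (hb : TStructureIsBounded t) :
    ∃ e : HeartTorsionTheory t ≃
        {t' : TStructure C //
          (∀ E : C, t.le (-1) E → t'.le 0 E) ∧ (∀ E : C, t'.le 0 E → t.le 0 E)},
      -- the forward map is 𝒟'^{≤0} = {E : Hⁱ(E)=0 for i>0 and H⁰(E) ∈ 𝒯}
      (∀ (tt : HeartTorsionTheory t) (E : C),
        (e tt).1.le 0 E ↔ (t.le 0 E ∧
          ∃ (A B : C) (f : A ⟶ E) (g : E ⟶ B) (h : B ⟶ A⟦(1 : ℤ)⟧),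
            t.le (-1) A ∧ heartP t B ∧ tt.tor B ∧ Triangle.mk f g h ∈ distTriang C)) ∧
      -- the inverse map is 𝒯 = 𝒜 ∩ 𝒟'^{≤0}
      (∀ (tt : HeartTorsionTheory t) (E : C),
        tt.tor E ↔ (heartP t E ∧ (e tt).1.le 0 E)) :=
  torsion_theories_biject_with_intermediate_tstructures_general t
end

section
/- The function d(𝒫, 𝒬) := sup over nonzero objects E of max(|φ⁺_𝒫(E) − φ⁺_𝒬(E)|, |φ⁻_𝒫(E) − φ⁻_𝒬(E)|) defines a generalized metric (possibly taking value ∞) on the set of slicings of a triangulated category: it is symmetric, satisfies the triangle inequality, and d(𝒫,𝒬) = 0 implies 𝒫 = 𝒬. -/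
open CategoryTheory CategoryTheory.Limits CategoryTheory.Pretriangulated

universe v u

variable (C : Type u) [Category.{v} C] [Preadditive C] [HasZeroObject C] [HasShift C ℤ]
  [∀ n : ℤ, (shiftFunctor C n).Additive] [Pretriangulated C]

variable {C} in
/-- `E` admits a Harder–Narasimhan filtration
`0 = E₀ → E₁ → ... → Eₙ ≅ E` by distinguished triangles `E_{i-1} → E_i → A_i → E_{i-1}[1]`
with nonzero factors `A_i ∈ 𝒫(φ_i)` and `φ₁ > ... > φₙ`, all phases satisfying the
predicate `pred`. (For `E ≅ 0` one takes `n = 0`.) -/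
def HasHNWith (P : ℝ → C → Prop) (pred : ℝ → Prop) (E : C) : Prop :=
  ∃ (n : ℕ) (obj : Fin (n + 1) → C) (f : ∀ i : Fin n, obj i.castSucc ⟶ obj i.succ)
    (A : Fin n → C) (π : ∀ i : Fin n, obj i.succ ⟶ A i)
    (δ : ∀ i : Fin n, A i ⟶ (obj i.castSucc)⟦(1 : ℤ)⟧) (φ : Fin n → ℝ),
    IsZero (obj 0) ∧ Nonempty (obj (Fin.last n) ≅ E) ∧ StrictAnti φ ∧
    (∀ i, ¬ IsZero (A i)) ∧ (∀ i, P (φ i) (A i)) ∧ (∀ i, pred (φ i)) ∧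
    (∀ i, Triangle.mk (f i) (π i) (δ i) ∈ distTriang C)

/-- A slicing of a triangulated category: full additive subcategories `𝒫(φ)`, `φ ∈ ℝ`,
with `Hom(𝒫(φ₁), 𝒫(φ₂)) = 0` for `φ₁ > φ₂`, `𝒫(φ)[1] = 𝒫(φ+1)` and
Harder–Narasimhan filtrations for all objects. -/
structure TriSlicing where
  P : ℝ → C → Prop
  iso_closed : ∀ (φ : ℝ) {E F : C}, (E ≅ F) → P φ E → P φ F
  zero_mem : ∀ (φ : ℝ) (E : C), IsZero E → P φ E
  hom_zero : ∀ {φ₁ φ₂ : ℝ}, φ₂ < φ₁ → ∀ {E F : C} (f : E ⟶ F), P φ₁ E → P φ₂ F → f = 0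
  shift : ∀ (φ : ℝ) (E : C), P φ E ↔ P (φ + 1) (E⟦(1 : ℤ)⟧)
  HN : ∀ E : C, HasHNWith P (fun _ => True) E

variable {C}

/-- The maximal HN phase `φ⁺(E)` of a nonzero object, defined as the infimum of all `a`
such that all HN factors of `E` have phase `≤ a`. -/
noncomputable def TriSlicing.phiPlus (σ : TriSlicing C) (E : C) : ℝ :=
  sInf {a : ℝ | HasHNWith σ.P (fun ψ => ψ ≤ a) E}

/-- The minimal HN phase `φ⁻(E)` of a nonzero object, defined as the supremum of all `a`
such that all HN factors of `E` have phase `≥ a`. -/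
noncomputable def TriSlicing.phiMinus (σ : TriSlicing C) (E : C) : ℝ :=
  sSup {a : ℝ | HasHNWith σ.P (fun ψ => a ≤ ψ) E}

/-- The generalized distance between two slicings:
`d(𝒫,𝒬) = sup_{E ≠ 0} max(|φ⁺_𝒫(E) − φ⁺_𝒬(E)|, |φ⁻_𝒫(E) − φ⁻_𝒬(E)|) ∈ [0,∞]`. -/
noncomputable def slicingDist (σ τ : TriSlicing C) : ENNReal :=
  ⨆ E : {E : C // ¬ IsZero E},
    ENNReal.ofReal (max |σ.phiPlus E.1 - τ.phiPlus E.1| |σ.phiMinus E.1 - τ.phiMinus E.1|)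

/-!
The summand of `slicingDist` at `E` is the sup-distance in `ℝ × ℝ` between the phase pairs
`(φ⁺(E), φ⁻(E))` for the two slicings, so symmetry and the triangle inequality hold objectwise.
For definiteness, a nonzero `E` lies in `𝒫(φ)` iff `φ⁺(E) = φ⁻(E) = φ`: for an HN filtration
with factors `A₁, …, Aₙ`, the slicing axioms give a nonzero map `A₁ → E` and a nonzero map
`E → Aₙ`, which pin `φ⁺(E)` and `φ⁻(E)` to the phases of `A₁` and `Aₙ`.
-/

namespace CategoryTheory.Pretriangulated

lemma comp_distTriang_mor₁_ne_zero {T : Triangle C} (hT : T ∈ distTriang C) {B : C}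
    (h : ∀ u : B ⟶ T.obj₃⟦(-1 : ℤ)⟧, u = 0) {g : B ⟶ T.obj₁} (hg : g ≠ 0) :
    g ≫ T.mor₁ ≠ 0 := by
  intro hg₁
  obtain ⟨u, rfl⟩ := Triangle.coyoneda_exact₂ _ (inv_rot_of_distTriang _ hT) g hg₁
  exact hg (by rw [h u]; exact zero_comp)

lemma distTriang_mor₂_ne_zero {T : Triangle C} (hT : T ∈ distTriang C) (h₃ : ¬ IsZero T.obj₃)
    (h : ∀ u : T.obj₁ ⟶ T.obj₃⟦(-1 : ℤ)⟧, u = 0) : T.mor₂ ≠ 0 := by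
  intro h₂
  obtain ⟨v, hv⟩ := Triangle.yoneda_exact₃ _ hT (𝟙 T.obj₃) (by rw [h₂, zero_comp])
  -- up to `T.obj₁⟦1⟧⟦-1⟧ ≅ T.obj₁`, the shift of `v` by `-1` is a map `T.obj₁ ⟶ T.obj₃⟦-1⟧`
  have hv₀ : v = 0 := by
    rw [← (shiftFunctor C (-1 : ℤ)).map_eq_zero_iff,
      ← cancel_epi ((shiftFunctorCompIsoId C (1 : ℤ) (-1) (by norm_num)).inv.app T.obj₁),
      comp_zero]
    exact h _
  exact h₃ (by rw [IsZero.iff_id_eq_zero, hv, hv₀, comp_zero])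

section Filtration

variable {n : ℕ} {obj : Fin (n + 1) → C} {f : ∀ i : Fin n, obj i.castSucc ⟶ obj i.succ}
  {A : Fin n → C} {π : ∀ i : Fin n, obj i.succ ⟶ A i}
  {δ : ∀ i : Fin n, A i ⟶ (obj i.castSucc)⟦(1 : ℤ)⟧}

lemma hom_to_filtration_eq_zero (hdist : ∀ i, Triangle.mk (f i) (π i) (δ i) ∈ distTriang C)
    (hz : IsZero (obj 0)) {B : C} (hA : ∀ i (g : B ⟶ A i), g = 0) :
    ∀ (i : Fin (n + 1)) (g : B ⟶ obj i), g = 0 := by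
  intro i
  induction i using Fin.induction with
  | zero => exact fun g => hz.eq_of_tgt g 0
  | succ i ih =>
    intro g
    obtain ⟨u, rfl⟩ := Triangle.coyoneda_exact₂ _ (hdist i) g (hA i _)
    rw [ih u]
    exact zero_comp

lemma hom_from_filtration_eq_zero (hdist : ∀ i, Triangle.mk (f i) (π i) (δ i) ∈ distTriang C)
    (hz : IsZero (obj 0)) {B : C} (hA : ∀ i (g : A i ⟶ B), g = 0) :
    ∀ (i : Fin (n + 1)) (g : obj i ⟶ B), g = 0 := by
  intro i
  induction i using Fin.induction with
  | zero => exact fun g => hz.eq_of_src g 0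
  | succ i ih =>
    intro g
    obtain ⟨u, rfl⟩ := Triangle.yoneda_exact₂ _ (hdist i) g (ih _)
    rw [hA i u]
    exact comp_zero

end Filtration

end CategoryTheory.Pretriangulated

open ZeroObject in
lemma hasHNWith_of_mem {P : ℝ → C → Prop} {pred : ℝ → Prop} {φ : ℝ} {E : C} (hP : P φ E)
    (hE : ¬ IsZero E) (hφ : pred φ) : HasHNWith P pred E := by
  refine ⟨1, Fin.cons 0 fun _ => E, fun _ => 0, fun _ => E, fun _ => 𝟙 E, fun _ => 0,
    fun _ => φ, isZero_zero C, ⟨Iso.refl E⟩, Subsingleton.strictAnti _, fun _ => hE,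
    fun _ => hP, fun _ => hφ, fun i => ?_⟩
  obtain rfl := Subsingleton.elim i 0
  exact contractible_distinguished₁ E

namespace TriSlicing

variable (σ : TriSlicing C)

noncomputable def phases (E : C) : ℝ × ℝ := (σ.phiPlus E, σ.phiMinus E)

lemma P_shift_neg_one {φ : ℝ} {X : C} (hX : σ.P φ X) : σ.P (φ - 1) (X⟦(-1 : ℤ)⟧) := by
  rw [σ.shift]
  refine σ.iso_closed _ ((shiftFunctorCompIsoId C (-1 : ℤ) 1 (by norm_num)).symm.app X) ?_
  rwa [sub_add_cancel]

lemma hom_eq_zero_of_hasHNWith_le {a φ : ℝ} {B E : C} (hB : σ.P φ B) (ha : a < φ)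
    (hE : HasHNWith σ.P (· ≤ a) E) (g : B ⟶ E) : g = 0 := by
  obtain ⟨n, obj, f, A, π, δ, ψ, hz, ⟨e⟩, -, -, hPA, hψ, hdist⟩ := hE
  have h := hom_to_filtration_eq_zero hdist hz
    (fun i g => σ.hom_zero ((hψ i).trans_lt ha) g hB (hPA i)) (Fin.last n) (g ≫ e.inv)
  simpa using h

lemma hom_eq_zero_of_hasHNWith_ge {a φ : ℝ} {B E : C} (hB : σ.P φ B) (ha : φ < a)
    (hE : HasHNWith σ.P (a ≤ ·) E) (g : E ⟶ B) : g = 0 := by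
  obtain ⟨n, obj, f, A, π, δ, ψ, hz, ⟨e⟩, -, -, hPA, hψ, hdist⟩ := hE
  have h := hom_from_filtration_eq_zero hdist hz
    (fun i g => σ.hom_zero (ha.trans_le (hψ i)) g (hPA i) hB) (Fin.last n) (e.hom ≫ g)
  simpa using h

lemma phiPlus_eq_of_hom_ne_zero {φ : ℝ} {B E : C} (hE : HasHNWith σ.P (· ≤ φ) E)
    (hB : σ.P φ B) {g : B ⟶ E} (hg : g ≠ 0) : σ.phiPlus E = φ := by
  have hlb : ∀ a ∈ {a : ℝ | HasHNWith σ.P (· ≤ a) E}, φ ≤ a := fun a ha =>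
    not_lt.1 fun hlt => hg (σ.hom_eq_zero_of_hasHNWith_le hB hlt ha g)
  exact le_antisymm (csInf_le ⟨φ, hlb⟩ hE) (le_csInf ⟨φ, hE⟩ hlb)

lemma phiMinus_eq_of_hom_ne_zero {φ : ℝ} {B E : C} (hE : HasHNWith σ.P (φ ≤ ·) E)
    (hB : σ.P φ B) {g : E ⟶ B} (hg : g ≠ 0) : σ.phiMinus E = φ := by
  have hub : ∀ a ∈ {a : ℝ | HasHNWith σ.P (a ≤ ·) E}, a ≤ φ := fun a ha =>
    not_lt.1 fun hlt => hg (σ.hom_eq_zero_of_hasHNWith_ge hB hlt ha g)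
  exact le_antisymm (csSup_le ⟨φ, hE⟩ hub) (le_csSup ⟨φ, hub⟩ hE)

lemma phases_eq_of_mem {φ : ℝ} {E : C} (hP : σ.P φ E) (hE : ¬ IsZero E) :
    σ.phases E = (φ, φ) := by
  have hid : 𝟙 E ≠ 0 := fun h => hE ((IsZero.iff_id_eq_zero E).2 h)
  exact Prod.ext (σ.phiPlus_eq_of_hom_ne_zero (hasHNWith_of_mem hP hE le_rfl) hP hid)
    (σ.phiMinus_eq_of_hom_ne_zero (hasHNWith_of_mem hP hE le_rfl) hP hid)

section HNFiltration

variable {n : ℕ} {obj : Fin (n + 2) → C} {f : ∀ i : Fin (n + 1), obj i.castSucc ⟶ obj i.succ}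
  {A : Fin (n + 1) → C} {π : ∀ i : Fin (n + 1), obj i.succ ⟶ A i}
  {δ : ∀ i : Fin (n + 1), A i ⟶ (obj i.castSucc)⟦(1 : ℤ)⟧} {φ : Fin (n + 1) → ℝ}

lemma exists_hom_from_first_factor_ne_zero (hz : IsZero (obj 0)) (hφ : ∀ i, φ i ≤ φ 0)
    (hA₀ : ¬ IsZero (A 0)) (hPA : ∀ i, σ.P (φ i) (A i))
    (hdist : ∀ i, Triangle.mk (f i) (π i) (δ i) ∈ distTriang C) :
    ∀ i : Fin (n + 1), ∃ g : A 0 ⟶ obj i.succ, g ≠ 0 := by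
  intro i
  induction i using Fin.induction with
  | zero =>
    have : IsIso (π 0) := (Triangle.isZero₁_iff_isIso₂ _ (hdist 0)).1 hz
    refine ⟨inv (π 0), fun h => hA₀ ?_⟩
    rw [IsZero.iff_id_eq_zero, ← IsIso.inv_hom_id (π 0), h, zero_comp]
  | succ i ih =>
    obtain ⟨g, hg⟩ := ih
    have hvanish (u : A 0 ⟶ (A i.succ)⟦(-1 : ℤ)⟧) : u = 0 :=
      σ.hom_zero (by linarith [hφ i.succ]) u (hPA 0) (σ.P_shift_neg_one (hPA i.succ))
    exact ⟨g ≫ f i.succ, comp_distTriang_mor₁_ne_zero (hdist i.succ) hvanish hg⟩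

lemma proj_last_factor_ne_zero (hz : IsZero (obj 0)) (hφ : ∀ i, φ (Fin.last n) ≤ φ i)
    (hA : ¬ IsZero (A (Fin.last n))) (hPA : ∀ i, σ.P (φ i) (A i))
    (hdist : ∀ i, Triangle.mk (f i) (π i) (δ i) ∈ distTriang C) :
    π (Fin.last n) ≠ 0 := by
  refine distTriang_mor₂_ne_zero (hdist _) hA ?_
  refine hom_from_filtration_eq_zero hdist hz (fun i u => σ.hom_zero ?_ u (hPA i)
    (σ.P_shift_neg_one (hPA _))) _
  linarith [hφ i]

lemma phases_eq_of_HN {E : C} (hz : IsZero (obj 0)) (e : obj (Fin.last (n + 1)) ≅ E)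
    (hanti : StrictAnti φ) (hnz : ∀ i, ¬ IsZero (A i)) (hPA : ∀ i, σ.P (φ i) (A i))
    (hdist : ∀ i, Triangle.mk (f i) (π i) (δ i) ∈ distTriang C) :
    σ.phases E = (φ 0, φ (Fin.last n)) := by
  have hφ₀ (i : Fin (n + 1)) : φ i ≤ φ 0 := hanti.antitone (Fin.zero_le i)
  have hφₙ (i : Fin (n + 1)) : φ (Fin.last n) ≤ φ i := hanti.antitone (Fin.le_last i)
  obtain ⟨g, hg⟩ := σ.exists_hom_from_first_factor_ne_zero hz hφ₀ (hnz 0) hPA hdist (Fin.last n)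
  refine Prod.ext (σ.phiPlus_eq_of_hom_ne_zero
      ⟨n + 1, obj, f, A, π, δ, φ, hz, ⟨e⟩, hanti, hnz, hPA, hφ₀, hdist⟩ (hPA 0)
      (g := g ≫ e.hom) (by simpa using hg))
    (σ.phiMinus_eq_of_hom_ne_zero
      ⟨n + 1, obj, f, A, π, δ, φ, hz, ⟨e⟩, hanti, hnz, hPA, hφₙ, hdist⟩ (hPA _)
      (g := e.inv ≫ π (Fin.last n)) ?_)
  simpa using σ.proj_last_factor_ne_zero hz hφₙ (hnz _) hPA hdist

end HNFiltration

lemma mem_of_phases_eq {φ : ℝ} {E : C} (hE : ¬ IsZero E) (h : σ.phases E = (φ, φ)) :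
    σ.P φ E := by
  obtain ⟨_ | n, obj, f, A, π, δ, ψ, hz, ⟨e⟩, hanti, hnz, hPA, -, hdist⟩ := σ.HN E
  · exact absurd (hz.of_iso e.symm) hE
  rw [σ.phases_eq_of_HN hz e hanti hnz hPA hdist, Prod.mk.injEq] at h
  obtain rfl : n = 0 := by
    simpa using congrArg Fin.val (hanti.injective (h.2.trans h.1.symm))
  have : IsIso (π 0) := (Triangle.isZero₁_iff_isIso₂ _ (hdist 0)).1 hz
  exact σ.iso_closed φ ((asIso (π 0)).symm ≪≫ e) (h.1 ▸ hPA 0)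

lemma P_iff_phases {φ : ℝ} {E : C} : σ.P φ E ↔ IsZero E ∨ σ.phases E = (φ, φ) := by
  refine ⟨fun hP => or_iff_not_imp_left.2 (σ.phases_eq_of_mem hP), ?_⟩
  rintro (hE | hE)
  · exact σ.zero_mem φ E hE
  · by_cases hz : IsZero E
    · exact σ.zero_mem φ E hz
    · exact σ.mem_of_phases_eq hz hE

lemma ext_of_phases {σ τ : TriSlicing C} (h : ∀ E, ¬ IsZero E → σ.phases E = τ.phases E) :
    σ = τ := by
  have hP : σ.P = τ.P := by
    ext φ E
    rw [σ.P_iff_phases, τ.P_iff_phases]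
    by_cases hE : IsZero E
    · simp [hE]
    · rw [h E hE]
  cases σ
  cases τ
  congr

end TriSlicing

lemma slicingDist_eq_iSup_edist (σ τ : TriSlicing C) :
    slicingDist σ τ = ⨆ E : {E : C // ¬ IsZero E}, edist (σ.phases E.1) (τ.phases E.1) := by
  simp only [slicingDist, edist_dist, Prod.dist_eq, Real.dist_eq, TriSlicing.phases]

theorem slicingDist_generalized_metric
    (σ τ ρ : TriSlicing C) :
    slicingDist σ τ = slicingDist τ σ ∧
    slicingDist σ ρ ≤ slicingDist σ τ + slicingDist τ ρ ∧
    (slicingDist σ τ = 0 → σ = τ) := by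
  simp only [slicingDist_eq_iSup_edist]
  refine ⟨by simp only [edist_comm], ?_, fun h => ?_⟩
  · refine iSup_le fun E => (edist_triangle _ (τ.phases E.1) _).trans ?_
    exact add_le_add (le_iSup_of_le E le_rfl) (le_iSup_of_le E le_rfl)
  · refine TriSlicing.ext_of_phases fun E hE => ?_
    exact edist_eq_zero.1 (ENNReal.iSup_eq_zero.1 h ⟨E, hE⟩)
end
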